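/- arXiv:2006.15168 — 4 statements merged into one kernel-verified Lean document; each statement's English description precedes it below -/
import Mathlib

section
/- Let (X,Y) and (X',Y') be an i.i.d. pair drawn from a distribution D on 𝒳 × {−1,+1}. Let A = {λ̄(X) ≠ 0}, B = {λ(X') ≠ 0}, and E = {d(X,X') ≤ r}. Assume: (i) P(Y ≠ Y' | E) ≤ M_Y(r); (ii) P(E | A ∩ B) ≥ P(E); (iii) A and B are independent; (iv) P(A) ≥ (1 + L_{λ'}(r)·p_{d(r)})·p_λ and P(B) ≥ p_λ, where p_{d(r)} = P(E). Then P(Y ≠ Y' | A ∩ B ∩ E) ≤ M_Y(r) / (p_λ² · (1 + L_{λ'}(r)·p_{d(r)})). -/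
open MeasureTheory

/-- The probability of an event, as a real number. -/
noncomputable def pr {Ω : Type*} [MeasurableSpace Ω] (μ : Measure Ω) (A : Set Ω) : ℝ :=
  (μ A).toReal

/-- The conditional probability `P(A | B)`, as a real number. -/
noncomputable def condP {Ω : Type*} [MeasurableSpace Ω] (μ : Measure Ω) (A B : Set Ω) : ℝ :=
  (μ (A ∩ B)).toReal / (μ B).toReal

/-- Smoothness of labels conditioned on the extension events:
with `A = {λ̄(X) ≠ 0}`, `B = {λ(X') ≠ 0}` and `E = {d(X,X') ≤ r}`, if
(i) `P(Y ≠ Y' | E) ≤ M_Y(r)`, (ii) `P(E | A ∩ B) ≥ P(E)`, (iii) `A, B` are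
independent, and (iv) `P(A) ≥ (1 + L·p_d)·p_λ`, `P(B) ≥ p_λ` where `p_d = P(E)`,
then `P(Y ≠ Y' | A ∩ B ∩ E) ≤ M_Y(r) / (p_λ² (1 + L·p_d))`. -/
theorem label_smoothness_on_extension
    {Ω : Type*} [MeasurableSpace Ω] (μ : Measure Ω) [IsProbabilityMeasure μ]
    (Y Y' : Ω → ℤ) (A B E : Set Ω) (MY L pd pl : ℝ)
    (hpl : 0 < pl) (hL : 0 ≤ L)
    (hpd : pd = pr μ E)
    (hM : condP μ {ω | Y ω ≠ Y' ω} E ≤ MY)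
    (hE : pr μ E ≤ condP μ E (A ∩ B))
    (hindep : pr μ (A ∩ B) = pr μ A * pr μ B)
    (hA : (1 + L * pd) * pl ≤ pr μ A)
    (hB : pl ≤ pr μ B) :
    condP μ {ω | Y ω ≠ Y' ω} (A ∩ B ∩ E) ≤ MY / (pl ^ 2 * (1 + L * pd)) := by
  set S := {ω | Y ω ≠ Y' ω}
  have hpd0 : 0 ≤ pd := hpd ▸ ENNReal.toReal_nonneg
  have hden : (0:ℝ) < 1 + L * pd := by nlinarith
  have hMY0 : 0 ≤ MY :=
    le_trans (div_nonneg ENNReal.toReal_nonneg ENNReal.toReal_nonneg) hM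
  rcases eq_or_lt_of_le hpd0 with h0 | hpdpos
  · -- pd = 0 case
    have hE0 : μ E = 0 := by
      have h1 : pr μ E = 0 := by rw [← hpd, ← h0]
      simp only [pr] at h1
      simpa [ENNReal.toReal_eq_zero_iff, measure_ne_top μ E] using h1
    have hnum : μ (S ∩ (A ∩ B ∩ E)) = 0 :=
      measure_mono_null (by intro x hx; exact hx.2.2) hE0
    rw [condP, hnum]
    simp only [ENNReal.toReal_zero, zero_div]
    positivity
  · -- pd > 0
    have hEne : (μ E).toReal = pd := hpd.symm
    have hAB : 0 < pr μ (A ∩ B) := by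
      rw [hindep]
      exact mul_pos (lt_of_lt_of_le (mul_pos hden hpl) hA) (lt_of_lt_of_le hpl hB)
    have hABR : 0 < (μ (A ∩ B)).toReal := hAB
    -- lower bound on denominator
    have hDlb : pd * pr μ (A ∩ B) ≤ (μ (E ∩ (A ∩ B))).toReal := by
      have h2 := hE
      rw [condP, ← hpd] at h2
      calc pd * pr μ (A ∩ B)
          ≤ ((μ (E ∩ (A ∩ B))).toReal / (μ (A ∩ B)).toReal) * pr μ (A ∩ B) :=
            mul_le_mul_of_nonneg_right h2 (le_of_lt hAB)
        _ = (μ (E ∩ (A ∩ B))).toReal := by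
            simp only [pr]
            field_simp
    have hsetEq : A ∩ B ∩ E = E ∩ (A ∩ B) := Set.inter_comm _ _
    have hD : pd * ((1 + L * pd) * pl * pl) ≤ (μ (A ∩ B ∩ E)).toReal := by
      rw [hsetEq]
      have h1 : (1 + L * pd) * pl * pl ≤ pr μ (A ∩ B) := by
        rw [hindep]
        exact mul_le_mul hA hB (le_of_lt hpl)
          (le_trans (le_of_lt (mul_pos hden hpl)) hA)
      nlinarith
    have hDpos : (0:ℝ) < pd * ((1 + L * pd) * pl * pl) := by positivity
    -- numerator bound
    have hnum1 : (μ (S ∩ (A ∩ B ∩ E))).toReal ≤ (μ (S ∩ E)).toReal := by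
      apply (ENNReal.toReal_le_toReal (measure_ne_top _ _) (measure_ne_top _ _)).mpr
      exact measure_mono (Set.inter_subset_inter_right _ (fun x hx => hx.2))
    have hnum2 : (μ (S ∩ E)).toReal ≤ MY * pd := by
      have h3 := hM
      rw [condP, hEne] at h3
      calc (μ (S ∩ E)).toReal = ((μ (S ∩ E)).toReal / pd) * pd := by
            field_simp
        _ ≤ MY * pd := mul_le_mul_of_nonneg_right h3 (le_of_lt hpdpos)
    rw [condP]
    calc (μ (S ∩ (A ∩ B ∩ E))).toReal / (μ (A ∩ B ∩ E)).toReal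
        ≤ (MY * pd) / (pd * ((1 + L * pd) * pl * pl)) :=
          div_le_div₀ (by positivity) (le_trans hnum1 hnum2) hDpos hD
      _ = MY / (pl ^ 2 * (1 + L * pd)) := by
          field_simp
end

section
/- (Lemma: coverage increase.) Let (X,Y),(X',Y') be an i.i.d. pair from D, λ a labeling function with coverage p_λ, and r > 0. Assume: (i) P(λ(X) = 0, λ(X') ≠ 0 | d(X,X') ≤ r) ≥ L_{λ'}(r); (ii) the events {d(X,X') ≤ r} and {X' ∈ supp(λ)} are independent, i.e., P(d(X,X') ≤ r, X' ∈ supp(λ)) = p_{d(r)}·p_λ. Then the newly labeled region satisfies P(X ∈ B_r(λ)) ≥ L_{λ'}(r)·p_{d(r)}·p_λ. -/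
open MeasureTheory

/-- **coverage increase.** If
`P(λ(X)=0, λ(X')≠0 | d(X,X') ≤ r) ≥ L` and `{d(X,X') ≤ r}` is independent of
`{X' ∈ supp λ}`, then the newly labeled region
`B_r(λ) = {x ∉ supp λ : ∃ x' ∈ supp λ, d(x,x') ≤ r}` satisfies
`P(X ∈ B_r(λ)) ≥ L·p_d·p_λ`. -/
theorem coverage_increase
    {Ω 𝒳 : Type*} [MeasurableSpace Ω] (μ : Measure Ω) [IsProbabilityMeasure μ]
    (X X' : Ω → 𝒳) (lam : 𝒳 → ℤ) (d : 𝒳 → 𝒳 → ℝ) (r : ℝ)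
    (L pd pl : ℝ)
    (hpd : pd = pr μ {ω | d (X ω) (X' ω) ≤ r})
    (hpl : pl = pr μ {ω | lam (X ω) ≠ 0})
    (hpl' : pr μ {ω | lam (X' ω) ≠ 0} = pl)
    (hL : L ≤ condP μ {ω | lam (X ω) = 0 ∧ lam (X' ω) ≠ 0} {ω | d (X ω) (X' ω) ≤ r})
    (hindep : pr μ {ω | d (X ω) (X' ω) ≤ r ∧ lam (X' ω) ≠ 0} = pd * pl) :
    L * pd * pl ≤ pr μ {ω | lam (X ω) = 0 ∧ ∃ x', lam x' ≠ 0 ∧ d (X ω) x' ≤ r} := by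
  have htarget0 : (0:ℝ) ≤ pr μ {ω | lam (X ω) = 0 ∧ ∃ x', lam x' ≠ 0 ∧ d (X ω) x' ≤ r} :=
    ENNReal.toReal_nonneg
  rcases le_or_gt L 0 with hL0 | hL0
  · have hpd0 : 0 ≤ pd := hpd ▸ ENNReal.toReal_nonneg
    have hpl0 : 0 ≤ pl := hpl ▸ ENNReal.toReal_nonneg
    nlinarith [mul_nonneg hpd0 hpl0, mul_nonpos_of_nonpos_of_nonneg hL0 (mul_nonneg hpd0 hpl0)]
  · -- L > 0
    have hmono : pr μ ({ω | lam (X ω) = 0 ∧ lam (X' ω) ≠ 0} ∩ {ω | d (X ω) (X' ω) ≤ r})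
        ≤ pr μ {ω | lam (X ω) = 0 ∧ ∃ x', lam x' ≠ 0 ∧ d (X ω) x' ≤ r} := by
      apply ENNReal.toReal_mono (measure_ne_top μ _)
      apply measure_mono
      rintro ω ⟨⟨h1, h2⟩, h3⟩
      exact ⟨h1, X' ω, h2, h3⟩
    have hpd0 : 0 ≤ pd := hpd ▸ ENNReal.toReal_nonneg
    have hpl0 : 0 ≤ pl := hpl ▸ ENNReal.toReal_nonneg
    have hpl1 : pl ≤ 1 := by
      rw [hpl]
      have h := ENNReal.toReal_mono (a := μ {ω | lam (X ω) ≠ 0}) (b := 1) (by simp) prob_le_one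
      simpa [pr] using h
    have hstep : L * pd ≤ pr μ ({ω | lam (X ω) = 0 ∧ lam (X' ω) ≠ 0} ∩ {ω | d (X ω) (X' ω) ≤ r}) := by
      unfold condP at hL
      rcases eq_or_lt_of_le hpd0 with h0 | h0
      · have : L * pd = 0 := by rw [← h0]; ring
        rw [this]; exact ENNReal.toReal_nonneg
      · have hpdeq : pd = (μ {ω | d (X ω) (X' ω) ≤ r}).toReal := hpd
        rw [hpdeq] at h0 ⊢
        calc L * (μ {ω | d (X ω) (X' ω) ≤ r}).toReal
            ≤ ((μ ({ω | lam (X ω) = 0 ∧ lam (X' ω) ≠ 0} ∩ {ω | d (X ω) (X' ω) ≤ r})).toReal /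
              (μ {ω | d (X ω) (X' ω) ≤ r}).toReal) * (μ {ω | d (X ω) (X' ω) ≤ r}).toReal := by
              exact mul_le_mul_of_nonneg_right hL (le_of_lt h0)
          _ = (μ ({ω | lam (X ω) = 0 ∧ lam (X' ω) ≠ 0} ∩ {ω | d (X ω) (X' ω) ≤ r})).toReal := by
              field_simp
    have : L * pd * pl ≤ L * pd := by
      nlinarith [mul_nonneg (mul_nonneg hL0.le hpd0) (sub_nonneg.mpr hpl1)]
    calc L * pd * pl ≤ L * pd := this
      _ ≤ _ := le_trans hstep hmono
end

section
/- (Ising-model independence.) Let (Y, u, v) be a random vector on {−1,+1}³ whose joint probability mass function is proportional to exp(θ₀·y + θ₁·u·y + θ₂·v·y) for fixed real parameters θ₀, θ₁, θ₂. Then the random variables u·Y and v·Y are independent, and moreover u·Y is independent of Y. -/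
open MeasureTheory
open scoped ENNReal

lemma ising_key {Ω : Type*} [MeasurableSpace Ω] (μ : Measure Ω) [IsProbabilityMeasure μ]
    (Y u v : Ω → ℤ) (p : ℤ → ℤ → ℤ → ℝ)
    (hY : ∀ ω, Y ω = 1 ∨ Y ω = -1)
    (hu : ∀ ω, u ω = 1 ∨ u ω = -1)
    (hv : ∀ ω, v ω = 1 ∨ v ω = -1)
    (hp0 : ∀ y s t : ℤ, 0 ≤ p y s t)
    (hsum : ∑ y ∈ ({-1,1} : Finset ℤ), ∑ s ∈ ({-1,1} : Finset ℤ),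
        ∑ t ∈ ({-1,1} : Finset ℤ), p y s t = 1)
    (hatom : ∀ y ∈ ({-1,1} : Finset ℤ), ∀ s ∈ ({-1,1} : Finset ℤ), ∀ t ∈ ({-1,1} : Finset ℤ),
      μ {ω | Y ω = y ∧ u ω = s ∧ v ω = t} = ENNReal.ofReal (p y s t))
    (P : ℤ → ℤ → ℤ → Prop) [∀ y s t, Decidable (P y s t)] :
    μ {ω | P (Y ω) (u ω) (v ω)}
      = ENNReal.ofReal (∑ y ∈ ({-1,1} : Finset ℤ), ∑ s ∈ ({-1,1} : Finset ℤ),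
          ∑ t ∈ ({-1,1} : Finset ℤ), if P y s t then p y s t else 0) := by
  have S0 : ∀ (Q : ℤ → ℤ → ℤ → Prop) [∀ y s t, Decidable (Q y s t)],
      0 ≤ ∑ y ∈ ({-1,1} : Finset ℤ), ∑ s ∈ ({-1,1} : Finset ℤ),
          ∑ t ∈ ({-1,1} : Finset ℤ), if Q y s t then p y s t else 0 := by
    intro Q _
    refine Finset.sum_nonneg fun y _ => Finset.sum_nonneg fun s _ => Finset.sum_nonneg fun t _ => ?_
    split <;> [exact hp0 y s t; exact le_rfl]
  have upper : ∀ (Q : ℤ → ℤ → ℤ → Prop) [∀ y s t, Decidable (Q y s t)],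
      μ {ω | Q (Y ω) (u ω) (v ω)}
        ≤ ENNReal.ofReal (∑ y ∈ ({-1,1} : Finset ℤ), ∑ s ∈ ({-1,1} : Finset ℤ),
            ∑ t ∈ ({-1,1} : Finset ℤ), if Q y s t then p y s t else 0) := by
    intro Q _
    have hsub : {ω | Q (Y ω) (u ω) (v ω)} ⊆
        ⋃ y ∈ ({-1,1} : Finset ℤ), ⋃ s ∈ ({-1,1} : Finset ℤ), ⋃ t ∈ ({-1,1} : Finset ℤ),
          (if Q y s t then {ω | Y ω = y ∧ u ω = s ∧ v ω = t} else ∅) := by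
      intro ω hω
      simp only [Set.mem_iUnion]
      refine ⟨Y ω, ?_, u ω, ?_, v ω, ?_, ?_⟩
      · rcases hY ω with h | h <;> simp [h]
      · rcases hu ω with h | h <;> simp [h]
      · rcases hv ω with h | h <;> simp [h]
      · have hQ : Q (Y ω) (u ω) (v ω) := hω
        rw [if_pos hQ]; exact ⟨rfl, rfl, rfl⟩
    refine (measure_mono hsub).trans ?_
    rw [ENNReal.ofReal_sum_of_nonneg (fun y _ => Finset.sum_nonneg fun s _ =>
      Finset.sum_nonneg fun t _ => by split <;> [exact hp0 y s t; exact le_rfl])]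
    refine (measure_biUnion_finset_le _ _).trans (Finset.sum_le_sum fun y hy => ?_)
    rw [ENNReal.ofReal_sum_of_nonneg (fun s _ => Finset.sum_nonneg fun t _ =>
      by split <;> [exact hp0 y s t; exact le_rfl])]
    refine (measure_biUnion_finset_le _ _).trans (Finset.sum_le_sum fun s hs => ?_)
    rw [ENNReal.ofReal_sum_of_nonneg (fun t _ => by split <;> [exact hp0 y s t; exact le_rfl])]
    refine (measure_biUnion_finset_le _ _).trans (Finset.sum_le_sum fun t ht => ?_)
    split
    · exact le_of_eq (hatom y hy s hs t ht)
    · simp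
  refine le_antisymm (upper P) ?_
  have hcompl := upper (fun y s t => ¬ P y s t)
  have hsplit : (∑ y ∈ ({-1,1} : Finset ℤ), ∑ s ∈ ({-1,1} : Finset ℤ),
          ∑ t ∈ ({-1,1} : Finset ℤ), if P y s t then p y s t else 0)
      + (∑ y ∈ ({-1,1} : Finset ℤ), ∑ s ∈ ({-1,1} : Finset ℤ),
          ∑ t ∈ ({-1,1} : Finset ℤ), if ¬ P y s t then p y s t else 0) = 1 := by
    rw [← hsum, ← Finset.sum_add_distrib]
    refine Finset.sum_congr rfl fun y _ => ?_
    rw [← Finset.sum_add_distrib]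
    refine Finset.sum_congr rfl fun s _ => ?_
    rw [← Finset.sum_add_distrib]
    refine Finset.sum_congr rfl fun t _ => ?_
    by_cases h : P y s t <;> simp [h]
  have hcover : (1 : ℝ≥0∞) ≤ μ {ω | P (Y ω) (u ω) (v ω)} + μ {ω | ¬ P (Y ω) (u ω) (v ω)} := by
    have : (Set.univ : Set Ω) ⊆ {ω | P (Y ω) (u ω) (v ω)} ∪ {ω | ¬ P (Y ω) (u ω) (v ω)} := by
      intro ω _; by_cases h : P (Y ω) (u ω) (v ω) <;> [exact Or.inl h; exact Or.inr h]
    calc (1 : ℝ≥0∞) = μ Set.univ := (measure_univ).symm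
      _ ≤ μ ({ω | P (Y ω) (u ω) (v ω)} ∪ {ω | ¬ P (Y ω) (u ω) (v ω)}) := measure_mono this
      _ ≤ _ := measure_union_le _ _
  have h1 : (1 : ℝ≥0∞) - μ {ω | ¬ P (Y ω) (u ω) (v ω)} ≤ μ {ω | P (Y ω) (u ω) (v ω)} :=
    tsub_le_iff_right.mpr hcover
  refine le_trans ?_ h1
  refine le_trans (le_of_eq ?_) (tsub_le_tsub_left hcompl 1)
  rw [← ENNReal.ofReal_one, ← ENNReal.ofReal_sub _ (S0 (fun y s t => ¬ P y s t))]
  congr 1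
  linarith [hsplit]

set_option maxHeartbeats 2000000 in
/-- **Ising-model independence.** If `(Y, u, v)` takes values in
`{−1,+1}³` with joint pmf proportional to `exp(θ₀·y + θ₁·u·y + θ₂·v·y)`, then
`u·Y` and `v·Y` are independent, and `u·Y` is independent of `Y`. -/
theorem ising_independence
    {Ω : Type*} [MeasurableSpace Ω] (μ : Measure Ω) [IsProbabilityMeasure μ]
    (Y u v : Ω → ℤ) (θ₀ θ₁ θ₂ : ℝ)
    (hY : ∀ ω, Y ω = 1 ∨ Y ω = -1)
    (hu : ∀ ω, u ω = 1 ∨ u ω = -1)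
    (hv : ∀ ω, v ω = 1 ∨ v ω = -1)
    (hpmf : ∀ y s t : ℤ, y ∈ ({-1, 1} : Set ℤ) → s ∈ ({-1, 1} : Set ℤ) →
      t ∈ ({-1, 1} : Set ℤ) →
      pr μ {ω | Y ω = y ∧ u ω = s ∧ v ω = t}
        = Real.exp (θ₀ * (y : ℝ) + θ₁ * (s : ℝ) * (y : ℝ) + θ₂ * (t : ℝ) * (y : ℝ))
          / (∑ y' ∈ ({-1, 1} : Finset ℤ), ∑ s' ∈ ({-1, 1} : Finset ℤ),
              ∑ t' ∈ ({-1, 1} : Finset ℤ),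
              Real.exp (θ₀ * (y' : ℝ) + θ₁ * (s' : ℝ) * (y' : ℝ) + θ₂ * (t' : ℝ) * (y' : ℝ)))) :
    (∀ s t : ℤ,
      μ ({ω | u ω * Y ω = s} ∩ {ω | v ω * Y ω = t})
        = μ {ω | u ω * Y ω = s} * μ {ω | v ω * Y ω = t}) ∧
    (∀ s y : ℤ,
      μ ({ω | u ω * Y ω = s} ∩ {ω | Y ω = y})
        = μ {ω | u ω * Y ω = s} * μ {ω | Y ω = y}) := by
  classical
  have hpair : ∀ (f : ℤ → ℝ), ∑ x ∈ ({-1,1} : Finset ℤ), f x = f (-1) + f 1 :=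
    fun f => Finset.sum_pair (by decide)
  obtain ⟨Z, hZdef⟩ : ∃ Z : ℝ, Z = ∑ y' ∈ ({-1, 1} : Finset ℤ), ∑ s' ∈ ({-1, 1} : Finset ℤ),
      ∑ t' ∈ ({-1, 1} : Finset ℤ),
      Real.exp (θ₀ * (y' : ℝ) + θ₁ * (s' : ℝ) * (y' : ℝ) + θ₂ * (t' : ℝ) * (y' : ℝ)) := ⟨_, rfl⟩
  simp only [← hZdef] at hpmf
  obtain ⟨A, hA⟩ : ∃ A : ℤ → ℝ, A = fun i : ℤ => Real.exp (θ₀ * (i : ℝ)) := ⟨_, rfl⟩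
  obtain ⟨B, hB⟩ : ∃ B : ℤ → ℝ, B = fun i : ℤ => Real.exp (θ₁ * (i : ℝ)) := ⟨_, rfl⟩
  obtain ⟨C, hC⟩ : ∃ C : ℤ → ℝ, C = fun i : ℤ => Real.exp (θ₂ * (i : ℝ)) := ⟨_, rfl⟩
  have hApos : ∀ i, 0 < A i := fun i => by rw [hA]; exact Real.exp_pos _
  have hBpos : ∀ i, 0 < B i := fun i => by rw [hB]; exact Real.exp_pos _
  have hCpos : ∀ i, 0 < C i := fun i => by rw [hC]; exact Real.exp_pos _
  have hexp : ∀ y s t : ℤ, Real.exp (θ₀ * (y : ℝ) + θ₁ * (s : ℝ) * (y : ℝ) + θ₂ * (t : ℝ) * (y : ℝ))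
      = A y * (B (s * y) * C (t * y)) := by
    intro y s t
    rw [hA, hB, hC]
    simp only
    rw [← Real.exp_add, ← Real.exp_add]
    congr 1
    push_cast
    ring
  have hZfact : Z = (A 1 + A (-1)) * ((B 1 + B (-1)) * (C 1 + C (-1))) := by
    rw [hZdef]
    simp only [hpair, hexp]
    norm_num
    ring
  have hZpos : 0 < Z := by
    rw [hZfact]
    exact mul_pos (by linarith [hApos 1, hApos (-1)])
      (mul_pos (by linarith [hBpos 1, hBpos (-1)]) (by linarith [hCpos 1, hCpos (-1)]))
  obtain ⟨q, hq⟩ : ∃ q : ℤ → ℤ → ℤ → ℝ, q = fun (y s t : ℤ) =>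
    Real.exp (θ₀ * (y : ℝ) + θ₁ * (s : ℝ) * (y : ℝ) + θ₂ * (t : ℝ) * (y : ℝ)) / Z := ⟨_, rfl⟩
  have hq0 : ∀ y s t : ℤ, 0 ≤ q y s t := fun y s t => by
    rw [hq]; exact div_nonneg (Real.exp_nonneg _) hZpos.le
  have hfact : ∀ y s t : ℤ, q y s t = A y * (B (s * y) * C (t * y)) / Z := fun y s t => by
    rw [hq]; simp only; rw [hexp]
  have hqsum : ∑ y ∈ ({-1,1} : Finset ℤ), ∑ s ∈ ({-1,1} : Finset ℤ),
      ∑ t ∈ ({-1,1} : Finset ℤ), q y s t = 1 := by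
    simp only [hq, ← Finset.sum_div]
    rw [← hZdef, div_self hZpos.ne']
  have hatom : ∀ y ∈ ({-1,1} : Finset ℤ), ∀ s ∈ ({-1,1} : Finset ℤ), ∀ t ∈ ({-1,1} : Finset ℤ),
      μ {ω | Y ω = y ∧ u ω = s ∧ v ω = t} = ENNReal.ofReal (q y s t) := by
    intro y hy s hs t ht
    have h := hpmf y s t (by simpa using hy) (by simpa using hs) (by simpa using ht)
    rw [hq]
    rw [show (fun (y s t : ℤ) => Real.exp (θ₀ * (y : ℝ) + θ₁ * (s : ℝ) * (y : ℝ) + θ₂ * (t : ℝ) * (y : ℝ)) / Z) y s t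
        = pr μ {ω | Y ω = y ∧ u ω = s ∧ v ω = t} from h.symm]
    exact (ENNReal.ofReal_toReal (measure_ne_top μ _)).symm
  have hnn : ∀ (P : ℤ → ℤ → ℤ → Prop) (inst : ∀ y s t, Decidable (P y s t)),
      0 ≤ ∑ y ∈ ({-1,1} : Finset ℤ), ∑ s ∈ ({-1,1} : Finset ℤ),
        ∑ t ∈ ({-1,1} : Finset ℤ), if P y s t then q y s t else 0 := by
    intro P inst
    refine Finset.sum_nonneg fun y _ => Finset.sum_nonneg fun s _ =>
      Finset.sum_nonneg fun t _ => ?_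
    split <;> [exact hq0 y s t; exact le_rfl]
  have hsu : ∀ ω, u ω * Y ω = 1 ∨ u ω * Y ω = -1 := fun ω => by
    rcases hu ω with h | h <;> rcases hY ω with h' | h' <;> simp [h, h']
  have hEu : ∀ c : ℤ, c ≠ 1 → c ≠ -1 → {ω | u ω * Y ω = c} = ∅ := by
    intro c h1 h2; ext ω
    simp only [Set.mem_setOf_eq, Set.mem_empty_iff_false, iff_false]
    rcases hsu ω with h | h <;> omega
  have hsv : ∀ ω, v ω * Y ω = 1 ∨ v ω * Y ω = -1 := fun ω => by
    rcases hv ω with h | h <;> rcases hY ω with h' | h' <;> simp [h, h']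
  have hEv : ∀ c : ℤ, c ≠ 1 → c ≠ -1 → {ω | v ω * Y ω = c} = ∅ := by
    intro c h1 h2; ext ω
    simp only [Set.mem_setOf_eq, Set.mem_empty_iff_false, iff_false]
    rcases hsv ω with h | h <;> omega
  have hEY : ∀ c : ℤ, c ≠ 1 → c ≠ -1 → {ω | Y ω = c} = ∅ := by
    intro c h1 h2; ext ω
    simp only [Set.mem_setOf_eq, Set.mem_empty_iff_false, iff_false]
    rcases hY ω with h | h <;> omega
  constructor
  · intro a b
    by_cases ha : a = 1 ∨ a = -1
    swap
    · push_neg at ha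
      rw [hEu a ha.1 ha.2]
      simp
    by_cases hb : b = 1 ∨ b = -1
    swap
    · push_neg at hb
      rw [hEv b hb.1 hb.2]
      simp
    have e1 : μ ({ω | u ω * Y ω = a} ∩ {ω | v ω * Y ω = b})
        = ENNReal.ofReal (∑ y ∈ ({-1,1} : Finset ℤ), ∑ s ∈ ({-1,1} : Finset ℤ),
            ∑ t ∈ ({-1,1} : Finset ℤ), if s * y = a ∧ t * y = b then q y s t else 0) :=
      ising_key μ Y u v q hY hu hv hq0 hqsum hatom (fun y s t => s * y = a ∧ t * y = b)
    have e2 : μ {ω | u ω * Y ω = a}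
        = ENNReal.ofReal (∑ y ∈ ({-1,1} : Finset ℤ), ∑ s ∈ ({-1,1} : Finset ℤ),
            ∑ t ∈ ({-1,1} : Finset ℤ), if s * y = a then q y s t else 0) :=
      ising_key μ Y u v q hY hu hv hq0 hqsum hatom (fun y s t => s * y = a)
    have e3 : μ {ω | v ω * Y ω = b}
        = ENNReal.ofReal (∑ y ∈ ({-1,1} : Finset ℤ), ∑ s ∈ ({-1,1} : Finset ℤ),
            ∑ t ∈ ({-1,1} : Finset ℤ), if t * y = b then q y s t else 0) :=
      ising_key μ Y u v q hY hu hv hq0 hqsum hatom (fun y s t => t * y = b)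
    rw [e1, e2, e3, ← ENNReal.ofReal_mul (hnn _ _)]
    congr 1
    rcases ha with ha | ha <;> rcases hb with hb | hb <;> subst ha <;> subst hb <;>
    · simp only [hpair]
      norm_num
      simp only [hfact]
      norm_num
      field_simp
      rw [hZfact]
      ring
  · intro a c
    by_cases ha : a = 1 ∨ a = -1
    swap
    · push_neg at ha
      rw [hEu a ha.1 ha.2]
      simp
    by_cases hc : c = 1 ∨ c = -1
    swap
    · push_neg at hc
      rw [hEY c hc.1 hc.2]
      simp
    have e1 : μ ({ω | u ω * Y ω = a} ∩ {ω | Y ω = c})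
        = ENNReal.ofReal (∑ y ∈ ({-1,1} : Finset ℤ), ∑ s ∈ ({-1,1} : Finset ℤ),
            ∑ t ∈ ({-1,1} : Finset ℤ), if s * y = a ∧ y = c then q y s t else 0) :=
      ising_key μ Y u v q hY hu hv hq0 hqsum hatom (fun y s t => s * y = a ∧ y = c)
    have e2 : μ {ω | u ω * Y ω = a}
        = ENNReal.ofReal (∑ y ∈ ({-1,1} : Finset ℤ), ∑ s ∈ ({-1,1} : Finset ℤ),
            ∑ t ∈ ({-1,1} : Finset ℤ), if s * y = a then q y s t else 0) :=
      ising_key μ Y u v q hY hu hv hq0 hqsum hatom (fun y s t => s * y = a)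
    have e3 : μ {ω | Y ω = c}
        = ENNReal.ofReal (∑ y ∈ ({-1,1} : Finset ℤ), ∑ s ∈ ({-1,1} : Finset ℤ),
            ∑ t ∈ ({-1,1} : Finset ℤ), if y = c then q y s t else 0) :=
      ising_key μ Y u v q hY hu hv hq0 hqsum hatom (fun y s t => y = c)
    rw [e1, e2, e3, ← ENNReal.ofReal_mul (hnn _ _)]
    congr 1
    rcases ha with ha | ha <;> rcases hc with hc | hc <;> subst ha <;> subst hc <;>
    · simp only [hpair]
      norm_num
      simp only [hfact]
      norm_num
      field_simp
      rw [hZfact]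
      ring
end

section
/- (Lemma: accuracy estimation error.) Consider m labeling functions whose accuracy parameters a_i^E = E[λ_i·Y | λ_i ≠ 0] are recovered by the triplet method, |â_i^E| = √(|M̂_ij·M̂_ik / M̂_jk|), from n unlabeled samples. Assume: (i) sign(â_i^E) = sign(a_i^E) for all i; (ii) |â_i^E|, |a_i^E| ≥ e_min > 0 for all i; (iii) all pairwise-agreement moments and their estimates have absolute value in [c₁, 1]; (iv) every pair used in recovery has support overlap at least o_min, and each 3×3 triplet submatrix error satisfies the matrix Hoeffding tail bound P(‖M̂_τ − M_τ‖₂ ≥ γ) ≤ 2·3·exp(−(n·o_min)·γ²/(32·3²)). Then the expected ℓ₁ estimation error of the accuracies â_i = (â_i^E + 1)/2 satisfies E[‖â − a‖₁] ≤ (81·√π / (e_min·c₁²)) · m / √(n·o_min). -/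
open MeasureTheory
open scoped Matrix.Norms.L2Operator

/-- The `3 × 3` difference between the empirical and true second-moment
submatrices associated with the triplet `(i, j i, k i)`. -/
def tripletErrMatrix {Ωs : Type*} {m : ℕ}
    (Mhat : Ωs → Fin m → Fin m → ℝ) (M : Fin m → Fin m → ℝ)
    (jf kf : Fin m → Fin m) (i : Fin m) (s : Ωs) : Matrix (Fin 3) (Fin 3) ℝ :=
  Matrix.of fun p q : Fin 3 =>
    Mhat s (![i, jf i, kf i] p) (![i, jf i, kf i] q)
      - M (![i, jf i, kf i] p) (![i, jf i, kf i] q)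

/-!
Once the signs agree, `|â - a| = ||â| - |a||` is at most `||â|² - |a|²| / (2 e_min)`, and
`|â|² = |M̂_ij M̂_ik / M̂_jk|` moves by at most the sum of the three entry errors divided by
`c₁²`, each of which is bounded by the operator norm of the triplet error matrix. The Hoeffding
bound therefore gives each coordinate's error Gaussian tails at scale `1 / √(n o_min)`.
Dominating the error by a staircase of that width and summing the tail probabilities of its
steps gives a geometric series; this yields the constant `72 < 81 √π`.
-/

theorem Matrix.norm_apply_le_l2_opNorm {𝕜 m n : Type*} [RCLike 𝕜] [Fintype m] [Fintype n]
    [DecidableEq n] (A : Matrix m n 𝕜) (i : m) (j : n) : ‖A i j‖ ≤ ‖A‖ := by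
  have h := A.l2_opNorm_mulVec (EuclideanSpace.single j 1)
  rw [PiLp.norm_single, norm_one, mul_one] at h
  refine le_trans (le_of_eq ?_) ((PiLp.norm_apply_le _ i).trans h)
  simp [Matrix.mulVec_single]

theorem Real.abs_sub_eq_abs_abs_sub_of_sign_eq {a b : ℝ} (h : Real.sign a = Real.sign b) :
    |a - b| = |(|a| - |b|)| := by
  rcases lt_trichotomy a 0 with ha | rfl | ha <;> rcases lt_trichotomy b 0 with hb | rfl | hb <;>
    simp [Real.sign_of_neg, Real.sign_of_pos, abs_of_neg, abs_of_pos, *] at h ⊢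
  · rw [← abs_neg]; ring_nf
  all_goals norm_num at h

theorem abs_sub_le_abs_sq_sub_div {u v e : ℝ} (he : 0 < e) (hu : e ≤ u) (hv : e ≤ v) :
    |u - v| ≤ |u ^ 2 - v ^ 2| / (2 * e) := by
  rw [le_div_iff₀ (by positivity), sq_sub_sq, abs_mul, abs_of_pos (by linarith : 0 < u + v)]
  exact mul_le_mul_of_nonneg_left (by linarith) (abs_nonneg _) |>.trans_eq (mul_comm _ _)

theorem abs_mul_div_sub_mul_div_le {x y z x' y' z' c : ℝ} (hc : 0 < c) (hc1 : c ≤ 1)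
    (hy : |y| ≤ 1) (hx' : |x'| ≤ 1) (hy' : |y'| ≤ 1) (hz : c ≤ |z|) (hz' : c ≤ |z'|) :
    |x * y / z - x' * y' / z'| ≤ (|x - x'| + |y - y'| + |z - z'|) / c ^ 2 := by
  have hz0 : z ≠ 0 := abs_pos.mp (hc.trans_le hz)
  have hz0' : z' ≠ 0 := abs_pos.mp (hc.trans_le hz')
  have hc2 : c ^ 2 ≤ |z| := by nlinarith
  have hzz : c ^ 2 ≤ |z * z'| := by rw [abs_mul, sq]; gcongr
  have hsplit : x * y / z - x' * y' / z' =
      (x - x') * y / z + x' * (y - y') / z + x' * y' * (z' - z) / (z * z') := by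
    field_simp; ring
  have h₁ : |(x - x') * y / z| ≤ |x - x'| / c ^ 2 := by
    rw [abs_div, abs_mul]
    exact div_le_div₀ (abs_nonneg _) (mul_le_of_le_one_right (abs_nonneg _) hy) (by positivity) hc2
  have h₂ : |x' * (y - y') / z| ≤ |y - y'| / c ^ 2 := by
    rw [abs_div, abs_mul]
    exact div_le_div₀ (abs_nonneg _) (mul_le_of_le_one_left (abs_nonneg _) hx') (by positivity) hc2
  have h₃ : |x' * y' * (z' - z) / (z * z')| ≤ |z - z'| / c ^ 2 := by
    rw [abs_div, abs_mul, abs_mul, abs_sub_comm z']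
    refine div_le_div₀ (abs_nonneg _) ?_ (by positivity) hzz
    exact mul_le_of_le_one_left (abs_nonneg _) (mul_le_one₀ hx' (abs_nonneg _) hy')
  calc _ ≤ |(x - x') * y / z| + |x' * (y - y') / z| + |x' * y' * (z' - z) / (z * z')| := by
        rw [hsplit]; exact abs_add_three _ _ _
    _ ≤ _ := by rw [add_div, add_div]; gcongr

theorem abs_sub_le_of_triplet {a a' x y z x' y' z' e c δ : ℝ}
    (ha : |a| = √|x * y / z|) (ha' : |a'| = √|x' * y' / z'|) (hsign : a.sign = a'.sign)
    (he : 0 < e) (hea : e ≤ |a|) (hea' : e ≤ |a'|) (hc : 0 < c)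
    (hy : |y| ≤ 1) (hx' : |x'| ≤ 1) (hy' : |y'| ≤ 1)
    (hz : c ≤ |z|) (hz1 : |z| ≤ 1) (hz' : c ≤ |z'|)
    (hδx : |x - x'| ≤ δ) (hδy : |y - y'| ≤ δ) (hδz : |z - z'| ≤ δ) :
    |a - a'| ≤ 3 * δ / (2 * e * c ^ 2) := by
  calc |a - a'| = |(|a| - |a'|)| := Real.abs_sub_eq_abs_abs_sub_of_sign_eq hsign
    _ ≤ |(|a| ^ 2 - |a'| ^ 2)| / (2 * e) := abs_sub_le_abs_sq_sub_div he hea hea'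
    _ = |(|x * y / z| - |x' * y' / z'|)| / (2 * e) := by
        rw [ha, ha', Real.sq_sqrt (abs_nonneg _), Real.sq_sqrt (abs_nonneg _)]
    _ ≤ |x * y / z - x' * y' / z'| / (2 * e) := by
        gcongr ?_ / _
        exact abs_abs_sub_abs_le_abs_sub _ _
    _ ≤ (|x - x'| + |y - y'| + |z - z'|) / c ^ 2 / (2 * e) := by
        gcongr; exact abs_mul_div_sub_mul_div_le hc (hz.trans hz1) hy hx' hy' hz hz'
    _ ≤ 3 * δ / c ^ 2 / (2 * e) := by gcongr; linarith
    _ = 3 * δ / (2 * e * c ^ 2) := by rw [div_div, mul_comm (c ^ 2)]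

theorem abs_tripletErrMatrix_apply_le_two {Ωs : Type*} {m : ℕ} {Mhat : Ωs → Fin m → Fin m → ℝ}
    {M : Fin m → Fin m → ℝ} (hMhat : ∀ s p q, |Mhat s p q| ≤ 1) (hM : ∀ p q, |M p q| ≤ 1)
    (jf kf : Fin m → Fin m) (i : Fin m) (s : Ωs) (p q : Fin 3) :
    |tripletErrMatrix Mhat M jf kf i s p q| ≤ 2 := by
  set v := ![i, jf i, kf i]
  have h := add_le_add (hMhat s (v p) (v q)) (hM (v p) (v q))
  exact (abs_sub _ _).trans (h.trans_eq one_add_one_eq_two)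

theorem le_sum_range_ite_of_le_mul {x τ : ℝ} (hx : 0 ≤ x) (hτ : 0 ≤ τ) :
    ∀ {K : ℕ}, x ≤ K * τ → x ≤ ∑ k ∈ Finset.range K, if k * τ ≤ x then τ else 0
  | 0, hK => by simpa using hK
  | K + 1, hK => by
    rw [Finset.sum_range_succ]
    by_cases hxK : x ≤ K * τ
    · have : 0 ≤ if (K : ℝ) * τ ≤ x then τ else 0 := by positivity
      linarith [le_sum_range_ite_of_le_mul hx hτ hxK]
    · rw [not_le] at hxK
      have hall : ∀ k ∈ Finset.range K, (if (k : ℝ) * τ ≤ x then τ else 0) = τ := fun k hk => by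
        have : (k : ℝ) ≤ K := by exact_mod_cast (Finset.mem_range.mp hk).le
        rw [if_pos (by nlinarith)]
      rw [Finset.sum_congr rfl hall, if_pos hxK.le, Finset.sum_const, Finset.card_range,
        nsmul_eq_mul]
      push_cast at hK
      linarith

theorem integral_sum_le_mul_sum_measureReal {Ω ι : Type*} [MeasurableSpace Ω] (ν : Measure Ω)
    [IsFiniteMeasure ν] (t : Finset ι) (h : ι → Ω → ℝ) {τ : ℝ} {K : ℕ} (hτ : 0 ≤ τ)
    (h0 : ∀ i x, 0 ≤ h i x) (hK : ∀ i x, h i x ≤ K * τ) :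
    ∫ x, ∑ i ∈ t, h i x ∂ν
      ≤ τ * ∑ i ∈ t, ∑ k ∈ Finset.range K, ν.real {x | k * τ ≤ h i x} := by
  set A : ι → ℕ → Set Ω := fun i k => toMeasurable ν {x | k * τ ≤ h i x}
  have hA : ∀ i k, MeasurableSet (A i k) := fun i k => measurableSet_toMeasurable ν _
  have hint : ∀ i k, Integrable ((A i k).indicator fun _ => τ) ν :=
    fun i k => (integrable_const τ).indicator (hA i k)
  -- The step function dominating `h i` is measurable even though `h i` need not be.
  have hstep : ∀ i x, h i x ≤ ∑ k ∈ Finset.range K, (A i k).indicator (fun _ => τ) x := by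
    intro i x
    refine (le_sum_range_ite_of_le_mul (h0 i x) hτ (hK i x)).trans (Finset.sum_le_sum ?_)
    intro k _
    split_ifs with hk
    · rw [Set.indicator_of_mem (subset_toMeasurable ν _ hk)]
    · exact Set.indicator_nonneg (fun _ _ => hτ) x
  calc ∫ x, ∑ i ∈ t, h i x ∂ν
      ≤ ∫ x, ∑ i ∈ t, ∑ k ∈ Finset.range K, (A i k).indicator (fun _ => τ) x ∂ν := by
        refine integral_mono_of_nonneg (.of_forall fun x => Finset.sum_nonneg fun i _ => h0 i x)
          (integrable_finsetSum _ fun i _ => integrable_finsetSum _ fun k _ => hint i k)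
          (.of_forall fun x => Finset.sum_le_sum fun i _ => hstep i x)
    _ = τ * ∑ i ∈ t, ∑ k ∈ Finset.range K, ν.real {x | k * τ ≤ h i x} := by
        simp_rw [integral_finsetSum _ fun i _ => integrable_finsetSum _ fun k _ => hint i k,
          integral_finsetSum _ fun k _ => hint _ k, integral_indicator_const _ (hA _ _),
          Finset.mul_sum, measureReal_def, A, measure_toMeasurable, smul_eq_mul, mul_comm]

theorem six_mul_exp_neg_le_half_pow {k : ℕ} (hk : k ≠ 0) :
    6 * Real.exp (-(8 * k ^ 2)) ≤ (1 / 2) ^ k := by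
  have hexp : 12 ≤ Real.exp 8 := by
    have h4 := Real.add_one_le_exp 4
    rw [show (8 : ℝ) = 4 + 4 by norm_num, Real.exp_add]
    nlinarith
  have hq : 2 * Real.exp (-8) ≤ 1 / 6 := by
    rw [Real.exp_neg, ← div_eq_mul_inv, div_le_div_iff₀ (Real.exp_pos 8) (by norm_num)]
    linarith
  have hk1 : (k : ℝ) ≤ k ^ 2 := by
    have : (1 : ℝ) ≤ k := by exact_mod_cast Nat.one_le_iff_ne_zero.mpr hk
    nlinarith
  calc 6 * Real.exp (-(8 * k ^ 2)) ≤ 6 * Real.exp (-8) ^ k := by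
        rw [← Real.exp_nat_mul]; gcongr; linarith
    _ = 6 * (2 * Real.exp (-8)) ^ k * (1 / 2) ^ k := by rw [mul_assoc, ← mul_pow]; ring_nf
    _ ≤ 6 * (2 * Real.exp (-8)) * (1 / 2) ^ k := by
        gcongr
        exact pow_le_of_le_one (by positivity) (by linarith) hk
    _ ≤ (1 / 2) ^ k := by nlinarith [pow_pos (one_half_pos (α := ℝ)) k]

theorem integral_sum_le_of_measureReal_le_half_pow {Ω ι : Type*} [MeasurableSpace Ω]
    (ν : Measure Ω) [IsFiniteMeasure ν] (t : Finset ι) (h : ι → Ω → ℝ) {τ B : ℝ} (hτ : 0 < τ)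
    (h0 : ∀ i x, 0 ≤ h i x) (hB : ∀ i x, h i x ≤ B)
    (htail : ∀ i (k : ℕ), ν.real {x | k * τ ≤ h i x} ≤ (1 / 2) ^ k) :
    ∫ x, ∑ i ∈ t, h i x ∂ν ≤ 2 * t.card * τ := by
  obtain ⟨K, hK⟩ := exists_nat_ge (B / τ)
  have hhK : ∀ i x, h i x ≤ K * τ := fun i x => (hB i x).trans ((div_le_iff₀ hτ).mp hK)
  calc ∫ x, ∑ i ∈ t, h i x ∂ν
      ≤ τ * ∑ i ∈ t, ∑ k ∈ Finset.range K, ν.real {x | k * τ ≤ h i x} :=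
        integral_sum_le_mul_sum_measureReal ν t h hτ.le h0 hhK
    _ ≤ τ * ∑ _i ∈ t, 2 := by
        gcongr with i
        exact (Finset.sum_le_sum fun k _ => htail i k).trans (sum_geometric_two_le K)
    _ = 2 * t.card * τ := by rw [Finset.sum_const, nsmul_eq_mul]; ring

theorem measureReal_le_half_pow_of_tail {Ω : Type*} [MeasurableSpace Ω] (ν : Measure Ω)
    [IsProbabilityMeasure ν] {f g : Ω → ℝ} {N κ : ℝ} (hN : 0 < N) (hκ : 0 < κ)
    (hgf : ∀ x, g x ≤ κ * f x)
    (htail : ∀ γ : ℝ, 0 < γ →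
      ν.real {x | γ ≤ f x} ≤ 2 * 3 * Real.exp (-(N * γ ^ 2 / (32 * 3 ^ 2))))
    (k : ℕ) : ν.real {x | k * (κ * (48 / √N)) ≤ g x} ≤ (1 / 2) ^ k := by
  rcases eq_or_ne k 0 with rfl | hk
  · simp [measureReal_le_one]
  have hγ : 0 < k * (48 / √N) := by positivity
  have hsub : {x | k * (κ * (48 / √N)) ≤ g x} ⊆ {x | k * (48 / √N) ≤ f x} := fun x hx =>
    le_of_mul_le_mul_left (by linarith [hgf x, hx.out] : κ * (k * (48 / √N)) ≤ κ * f x) hκ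
  have hexponent : N * (k * (48 / √N)) ^ 2 / (32 * 3 ^ 2) = 8 * k ^ 2 := by
    rw [mul_pow, div_pow, Real.sq_sqrt hN.le]; field_simp; norm_num
  calc ν.real {x | k * (κ * (48 / √N)) ≤ g x}
      ≤ 2 * 3 * Real.exp (-(N * (k * (48 / √N)) ^ 2 / (32 * 3 ^ 2))) :=
        (measureReal_mono hsub).trans (htail _ hγ)
    _ = 6 * Real.exp (-(8 * k ^ 2)) := by rw [hexponent]; norm_num
    _ ≤ (1 / 2) ^ k := six_mul_exp_neg_le_half_pow hk

theorem triplet_accuracy_estimation_error_general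
    {Ωs : Type*} [MeasurableSpace Ωs]
    (ν : Measure Ωs) [IsProbabilityMeasure ν]
    (m n : ℕ) (hn : 0 < n)
    (jf kf : Fin m → Fin m)
    (aE : Fin m → ℝ) (M : Fin m → Fin m → ℝ)
    (ahatE : Ωs → Fin m → ℝ) (Mhat : Ωs → Fin m → Fin m → ℝ)
    (emin c1 omin : ℝ)
    -- the triplet-method identities, for the true and estimated parameters
    (htrue : ∀ i, |aE i| =
      Real.sqrt |M i (jf i) * M i (kf i) / M (jf i) (kf i)|)
    (hhat : ∀ s i, |ahatE s i| =
      Real.sqrt |Mhat s i (jf i) * Mhat s i (kf i) / Mhat s (jf i) (kf i)|)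
    -- (i) sign recovery
    (hsign : ∀ s i, Real.sign (ahatE s i) = Real.sign (aE i))
    -- (ii) magnitude lower bounds
    (hemin : 0 < emin)
    (hemin_hat : ∀ s i, emin ≤ |ahatE s i|)
    (hemin_true : ∀ i, emin ≤ |aE i|)
    -- (iii) moment magnitude bounds
    (hc1 : 0 < c1)
    (hMbnd : ∀ p q, c1 ≤ |M p q| ∧ |M p q| ≤ 1)
    (hMhatbnd : ∀ s p q, c1 ≤ |Mhat s p q| ∧ |Mhat s p q| ≤ 1)
    -- (iv) pairwise support overlap and matrix Hoeffding tail bound per triplet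
    (homin : 0 < omin)
    (hHoeffding : ∀ (i : Fin m) (γ : ℝ), 0 < γ →
      (ν {s | γ ≤ ‖tripletErrMatrix Mhat M jf kf i s‖}).toReal
        ≤ 2 * 3 * Real.exp (-((n * omin) * γ ^ 2 / (32 * 3 ^ 2)))) :
    (∫ s, ∑ i, |(ahatE s i + 1) / 2 - (aE i + 1) / 2| ∂ν)
      ≤ (81 * Real.sqrt Real.pi / (emin * c1 ^ 2)) * m / Real.sqrt (n * omin) := by
  set E := tripletErrMatrix Mhat M jf kf
  have herr : ∀ i s δ, (∀ p q, |E i s p q| ≤ δ) →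
      |(ahatE s i + 1) / 2 - (aE i + 1) / 2| ≤ 3 / (4 * emin * c1 ^ 2) * δ := fun i s δ hδ => by
    have h := abs_sub_le_of_triplet (hhat s i) (htrue i) (hsign s i) hemin (hemin_hat s i)
      (hemin_true i) hc1 (hMhatbnd s i (kf i)).2 (hMbnd i (jf i)).2 (hMbnd i (kf i)).2
      (hMhatbnd s (jf i) (kf i)).1 (hMhatbnd s (jf i) (kf i)).2 (hMbnd (jf i) (kf i)).1
      (hδ 0 1) (hδ 0 2) (hδ 1 2)
    calc |(ahatE s i + 1) / 2 - (aE i + 1) / 2| = |ahatE s i - aE i| / 2 := by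
          rw [← abs_two, ← abs_div]; ring_nf
      _ ≤ 3 * δ / (2 * emin * c1 ^ 2) / 2 := by gcongr
      _ = 3 / (4 * emin * c1 ^ 2) * δ := by ring
  have hN : 0 < (n : ℝ) * omin := by positivity
  calc (∫ s, ∑ i, |(ahatE s i + 1) / 2 - (aE i + 1) / 2| ∂ν)
      ≤ 2 * Fintype.card (Fin m) * (3 / (4 * emin * c1 ^ 2) * (48 / √(n * omin))) :=
        integral_sum_le_of_measureReal_le_half_pow ν _ _ (by positivity) (fun _ _ => abs_nonneg _)
          (fun i s => herr i s 2 (abs_tripletErrMatrix_apply_le_two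
            (fun s p q => (hMhatbnd s p q).2) (fun p q => (hMbnd p q).2) jf kf i s))
          (fun i => measureReal_le_half_pow_of_tail ν hN (by positivity)
            (fun s => herr i s _ (E i s).norm_apply_le_l2_opNorm) (hHoeffding i))
    _ = 72 / (emin * c1 ^ 2) * m / √(n * omin) := by rw [Fintype.card_fin]; ring
    _ ≤ (81 * √Real.pi / (emin * c1 ^ 2)) * m / √(n * omin) := by
        gcongr
        nlinarith [Real.one_le_sqrt.mpr (by linarith [Real.pi_gt_three] : (1 : ℝ) ≤ Real.pi)]

/-- **accuracy estimation error of the triplet method.** Under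
sign recovery, magnitude bounds `e_min`, moment bounds `[c₁, 1]`, pairwise
support overlap at least `o_min`, and the matrix-Hoeffding tail bound for each
triplet submatrix (in the `ℓ₂` operator norm), the expected `ℓ₁` estimation
error of the accuracies `â_i = (â_i^E + 1)/2` satisfies
`E[‖â − a‖₁] ≤ (81√π/(e_min·c₁²))·m/√(n·o_min)`. -/
theorem triplet_accuracy_estimation_error
    {Ω 𝒳 Ωs : Type*} [MeasurableSpace Ω] [MeasurableSpace Ωs]
    (μ : Measure Ω) [IsProbabilityMeasure μ]
    (ν : Measure Ωs) [IsProbabilityMeasure ν]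
    (X : Ω → 𝒳) (Y : Ω → ℤ) (m n : ℕ) (hn : 0 < n)
    (lfs : Fin m → 𝒳 → ℤ)
    (jf kf : Fin m → Fin m)
    (aE : Fin m → ℝ) (M : Fin m → Fin m → ℝ)
    (ahatE : Ωs → Fin m → ℝ) (Mhat : Ωs → Fin m → Fin m → ℝ)
    (emin c1 omin : ℝ)
    -- true accuracy parameters a_i^E = E[λ_i·Y | λ_i ≠ 0]
    (haE : ∀ i, aE i =
      (∫ ω in {ω | lfs i (X ω) ≠ 0}, ((lfs i (X ω) * Y ω : ℤ) : ℝ) ∂μ)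
        / pr μ {ω | lfs i (X ω) ≠ 0})
    -- true pairwise agreement moments M_pq = E[λ_p·λ_q | λ_p, λ_q ≠ 0]
    (hM : ∀ p q, M p q =
      (∫ ω in {ω | lfs p (X ω) ≠ 0 ∧ lfs q (X ω) ≠ 0},
          ((lfs p (X ω) * lfs q (X ω) : ℤ) : ℝ) ∂μ)
        / pr μ {ω | lfs p (X ω) ≠ 0 ∧ lfs q (X ω) ≠ 0})
    -- the triplet-method identities, for the true and estimated parameters
    (htrue : ∀ i, |aE i| =
      Real.sqrt |M i (jf i) * M i (kf i) / M (jf i) (kf i)|)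
    (hhat : ∀ s i, |ahatE s i| =
      Real.sqrt |Mhat s i (jf i) * Mhat s i (kf i) / Mhat s (jf i) (kf i)|)
    -- (i) sign recovery
    (hsign : ∀ s i, Real.sign (ahatE s i) = Real.sign (aE i))
    -- (ii) magnitude lower bounds
    (hemin : 0 < emin)
    (hemin_hat : ∀ s i, emin ≤ |ahatE s i|)
    (hemin_true : ∀ i, emin ≤ |aE i|)
    -- (iii) moment magnitude bounds
    (hc1 : 0 < c1)
    (hMbnd : ∀ p q, c1 ≤ |M p q| ∧ |M p q| ≤ 1)
    (hMhatbnd : ∀ s p q, c1 ≤ |Mhat s p q| ∧ |Mhat s p q| ≤ 1)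
    -- (iv) pairwise support overlap and matrix Hoeffding tail bound per triplet
    (homin : 0 < omin)
    (hoverlap : ∀ p q : Fin m, p ≠ q →
      omin ≤ pr μ {ω | lfs p (X ω) ≠ 0 ∧ lfs q (X ω) ≠ 0})
    (hHoeffding : ∀ (i : Fin m) (γ : ℝ), 0 < γ →
      (ν {s | γ ≤ ‖tripletErrMatrix Mhat M jf kf i s‖}).toReal
        ≤ 2 * 3 * Real.exp (-((n * omin) * γ ^ 2 / (32 * 3 ^ 2)))) :
    (∫ s, ∑ i, |(ahatE s i + 1) / 2 - (aE i + 1) / 2| ∂ν)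
      ≤ (81 * Real.sqrt Real.pi / (emin * c1 ^ 2)) * m / Real.sqrt (n * omin) :=
  triplet_accuracy_estimation_error_general ν m n hn jf kf aE M ahatE Mhat emin c1 omin htrue hhat
    hsign hemin hemin_hat hemin_true hc1 hMbnd hMhatbnd homin hHoeffding
end
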